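/- Let X be a coherent configuration of degree n, maximal valency k, and indistinguishing number c satisfying n > 3·c·k·(k-1), and fix a point μ. Then for any subset Δ of points with |Δ| ≤ 6, there exists a point λ such that for every δ ∈ Δ, the intersection number c_{xr}^y equals 1, where x = r(μ,δ), y = r(μ,λ), r = r(δ,λ). -/

import Mathlib

/-!
Put `x = r(μ,δ)` and `r = r(δ,λ)`. Counted at the pair `(μ,λ)`, the number `c_{xr}^y` is the
number of `γ ∈ μx` with `r(γ,λ) = r(δ,λ)`; it counts `δ`, and any other such `γ` puts `λ` into
`c(γ,δ)`. So `δ ← λ` holds unless `λ` lies in one of the at most `k - 1` sets `c(γ,δ)`,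
`γ ∈ μx \ {δ}`, each of size at most `c`. For six points `δ` this excludes at most
`6 (k - 1) c ≤ 3 c k (k - 1) < n` points, and any remaining point is a common `λ`.
-/

open Finset

structure CoherentConfiguration (Ω : Type*) [Fintype Ω] [DecidableEq Ω] where
  S : Set (Finset (Ω × Ω))
  nonempty_mem : ∀ s ∈ S, s.Nonempty
  cover : ∀ p : Ω × Ω, ∃ s ∈ S, p ∈ s
  pairwise_disjoint : ∀ s ∈ S, ∀ t ∈ S, s ≠ t → ∀ p : Ω × Ω, p ∈ s → p ∉ t
  diag_union : ∀ s ∈ S, ∀ p ∈ s, p.1 = p.2 → ∀ q ∈ s, q.1 = q.2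
  conv_mem : ∀ s ∈ S, s.image (fun p => (p.2, p.1)) ∈ S
  inter_const : ∀ r ∈ S, ∀ s ∈ S, ∀ t ∈ S, ∀ p ∈ t, ∀ q ∈ t,
    (Finset.univ.filter fun γ => (p.1, γ) ∈ r ∧ (γ, p.2) ∈ s).card =
    (Finset.univ.filter fun γ => (q.1, γ) ∈ r ∧ (γ, q.2) ∈ s).card

namespace CoherentConfiguration

variable {Ω : Type*} [Fintype Ω] [DecidableEq Ω]
variable {Ω' : Type*} [Fintype Ω'] [DecidableEq Ω']

/-- The converse relation `r*`. -/
def conv (r : Finset (Ω × Ω)) : Finset (Ω × Ω) := r.image fun p => (p.2, p.1)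

/-- The intersection number `c_{rs}^t`, computed at a chosen pair of `t`. -/
noncomputable def interNum (r s t : Finset (Ω × Ω)) : ℕ :=
  if h : t.Nonempty then
    (Finset.univ.filter fun γ => (h.choose.1, γ) ∈ r ∧ (γ, h.choose.2) ∈ s).card
  else 0

/-- The valency `n_s`, computed at a chosen point in the domain of `s`. -/
noncomputable def valency (s : Finset (Ω × Ω)) : ℕ :=
  if h : s.Nonempty then (Finset.univ.filter fun β : Ω => (h.choose.1, β) ∈ s).card
  else 0

/-- The complex product `rs`: the set of basis relations `t` with `c_{rs}^t ≠ 0`. -/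
def cprod (C : CoherentConfiguration Ω) (r s : Finset (Ω × Ω)) : Set (Finset (Ω × Ω)) :=
  {t | t ∈ C.S ∧ interNum r s t ≠ 0}

/-- The maximal valency of a coherent configuration. -/
noncomputable def maxValency (C : CoherentConfiguration Ω) : ℕ :=
  sSup {n | ∃ s ∈ C.S, n = valency s}

/-- The set `c(α,β) = {γ : r(γ,α) = r(γ,β)}`. -/
def indisSet (C : CoherentConfiguration Ω) (α β : Ω) : Set Ω :=
  {γ | ∀ s ∈ C.S, ((γ, α) ∈ s ↔ (γ, β) ∈ s)}

/-- The indistinguishing number of a coherent configuration. -/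
noncomputable def indisNum (C : CoherentConfiguration Ω) : ℕ :=
  sSup {n | ∃ α β : Ω, α ≠ β ∧ n = (C.indisSet α β).ncard}

/-- The (a) basis relation containing the pair `(α,β)`. -/
noncomputable def rel (C : CoherentConfiguration Ω) (α β : Ω) : Finset (Ω × Ω) :=
  (C.cover (α, β)).choose

/-- `D` is a fission of `C`: every basis relation of `C` is a union of basis
relations of `D`. -/
def IsFission (C D : CoherentConfiguration Ω) : Prop :=
  ∀ s ∈ C.S, ∃ T ⊆ D.S, (s : Set (Ω × Ω)) = ⋃ t ∈ T, (t : Set (Ω × Ω))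

/-- `φ` is an algebraic isomorphism from `C` onto `C'`. -/
def IsAlgIso (C : CoherentConfiguration Ω) (C' : CoherentConfiguration Ω')
    (φ : Finset (Ω × Ω) → Finset (Ω' × Ω')) : Prop :=
  Set.BijOn φ C.S C'.S ∧
  ∀ r ∈ C.S, ∀ s ∈ C.S, ∀ t ∈ C.S, interNum r s t = interNum (φ r) (φ s) (φ t)

end CoherentConfiguration

namespace CoherentConfiguration

variable {Ω : Type*} [DecidableEq Ω]

lemma mem_conv_of_mem {r : Finset (Ω × Ω)} {a b : Ω} (h : (a, b) ∈ r) : (b, a) ∈ conv r :=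
  mem_image.mpr ⟨(a, b), h, rfl⟩

variable [Fintype Ω] (C : CoherentConfiguration Ω)

/-- The neighbourhood `αr = {β : (α,β) ∈ r}`. -/
def nbhd (r : Finset (Ω × Ω)) (α : Ω) : Finset Ω := univ.filter fun β => (α, β) ∈ r

lemma rel_mem (α β : Ω) : C.rel α β ∈ C.S := (C.cover (α, β)).choose_spec.1

lemma mem_rel (α β : Ω) : (α, β) ∈ C.rel α β := (C.cover (α, β)).choose_spec.2

lemma eq_of_mem_of_mem {s t : Finset (Ω × Ω)} (hs : s ∈ C.S) (ht : t ∈ C.S) {p : Ω × Ω}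
    (hps : p ∈ s) (hpt : p ∈ t) : s = t :=
  by_contra fun hne => C.pairwise_disjoint s hs t ht hne p hps hpt

lemma conv_mem_S {r : Finset (Ω × Ω)} (hr : r ∈ C.S) : conv r ∈ C.S := C.conv_mem r hr

lemma interNum_eq_card {x r y : Finset (Ω × Ω)} (hx : x ∈ C.S) (hr : r ∈ C.S) (hy : y ∈ C.S)
    {a b : Ω} (hab : (a, b) ∈ y) :
    interNum x r y = #{γ | (a, γ) ∈ x ∧ (γ, b) ∈ r} := by
  have hne : y.Nonempty := ⟨_, hab⟩
  rw [interNum, dif_pos hne]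
  exact C.inter_const x hx r hr y hy hne.choose hne.choose_spec (a, b) hab

/-- Compare `c_{ex}^x`, `e = r(α,α)`, at `(α,β)` and at `p`. -/
lemma mem_rel_self_of_mem {x : Finset (Ω × Ω)} (hx : x ∈ C.S) {α β : Ω} (hαβ : (α, β) ∈ x)
    {p : Ω × Ω} (hp : p ∈ x) : (p.1, p.1) ∈ C.rel α α := by
  have hcount := C.inter_const (C.rel α α) (C.rel_mem α α) x hx x hx (α, β) hαβ p hp
  have hα : α ∈ ({γ | (α, γ) ∈ C.rel α α ∧ (γ, β) ∈ x} : Finset Ω) := by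
    simpa using ⟨C.mem_rel α α, hαβ⟩
  obtain ⟨γ, hγ⟩ := card_pos.mp (hcount ▸ card_pos.mpr ⟨α, hα⟩)
  have hγ : (p.1, γ) ∈ C.rel α α := (mem_filter.mp hγ).2.1
  have hpγ : p.1 = γ := C.diag_union _ (C.rel_mem α α) (α, α) (C.mem_rel α α) rfl _ hγ
  rwa [← hpγ] at hγ

/-- `#αx = c_{xx*}^t` for every `(α,α) ∈ t`. -/
lemma card_nbhd_eq_of_mem {x t : Finset (Ω × Ω)} (hx : x ∈ C.S) (ht : t ∈ C.S) {α a : Ω}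
    (hα : (α, α) ∈ t) (ha : (a, a) ∈ t) : #(nbhd x α) = #(nbhd x a) := by
  have hcount := C.inter_const x hx (conv x) (C.conv_mem_S hx) t ht (α, α) hα (a, a) ha
  have hnbhd (b : Ω) : ({γ | (b, γ) ∈ x ∧ (γ, b) ∈ conv x} : Finset Ω) = nbhd x b :=
    filter_congr fun _ _ => and_iff_left_of_imp mem_conv_of_mem
  rwa [hnbhd, hnbhd] at hcount

lemma card_nbhd_eq_valency {x : Finset (Ω × Ω)} (hx : x ∈ C.S) {α β : Ω} (hαβ : (α, β) ∈ x) :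
    #(nbhd x α) = valency x := by
  have hne : x.Nonempty := ⟨_, hαβ⟩
  rw [valency, dif_pos hne]
  exact C.card_nbhd_eq_of_mem hx (C.rel_mem α α) (C.mem_rel α α)
    (C.mem_rel_self_of_mem hx hαβ hne.choose_spec)

lemma valency_le_maxValency {s : Finset (Ω × Ω)} (hs : s ∈ C.S) : valency s ≤ C.maxValency := by
  refine le_csSup ⟨Fintype.card Ω, ?_⟩ ⟨s, hs, rfl⟩
  rintro _ ⟨t, -, rfl⟩
  unfold valency
  split
  · exact (card_filter_le _ _).trans_eq card_univ
  · exact Nat.zero_le _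

lemma ncard_indisSet_le {α β : Ω} (hαβ : α ≠ β) : (C.indisSet α β).ncard ≤ C.indisNum := by
  refine le_csSup ⟨Fintype.card Ω, ?_⟩ ⟨α, β, hαβ, rfl⟩
  rintro _ ⟨a, b, -, rfl⟩
  exact (Set.ncard_le_card _).trans_eq Nat.card_eq_fintype_card

lemma mem_indisSet_of_mem {r : Finset (Ω × Ω)} (hr : r ∈ C.S) {γ δ l : Ω} (hγ : (γ, l) ∈ r)
    (hδ : (δ, l) ∈ r) : l ∈ C.indisSet γ δ := by
  intro s hs
  have hconv {a : Ω} (ha : (a, l) ∈ r) (hsa : (l, a) ∈ s) : s = conv r :=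
    C.eq_of_mem_of_mem hs (C.conv_mem_S hr) hsa (mem_conv_of_mem ha)
  exact ⟨fun h => hconv hγ h ▸ mem_conv_of_mem hδ, fun h => hconv hδ h ▸ mem_conv_of_mem hγ⟩

open Classical in
noncomputable def badSet (μ δ : Ω) : Finset Ω :=
  ((nbhd (C.rel μ δ) μ).erase δ).biUnion fun γ => (C.indisSet γ δ).toFinset

lemma card_badSet_le (μ δ : Ω) : #(C.badSet μ δ) ≤ (C.maxValency - 1) * C.indisNum := by
  classical
  have hnbhd : #((nbhd (C.rel μ δ) μ).erase δ) ≤ C.maxValency - 1 := by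
    rw [card_erase_of_mem (by simpa [nbhd] using C.mem_rel μ δ),
      C.card_nbhd_eq_valency (C.rel_mem μ δ) (C.mem_rel μ δ)]
    exact Nat.sub_le_sub_right (C.valency_le_maxValency (C.rel_mem μ δ)) 1
  refine (card_biUnion_le_card_mul _ _ _ fun γ hγ => ?_).trans (Nat.mul_le_mul_right _ hnbhd)
  rw [← Set.ncard_eq_toFinset_card']
  exact C.ncard_indisSet_le (ne_of_mem_erase hγ)

lemma interNum_eq_one_of_notMem_badSet {μ δ l : Ω} (hl : l ∉ C.badSet μ δ) :
    interNum (C.rel μ δ) (C.rel δ l) (C.rel μ l) = 1 := by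
  classical
  rw [C.interNum_eq_card (C.rel_mem μ δ) (C.rel_mem δ l) (C.rel_mem μ l) (C.mem_rel μ l),
    card_eq_one]
  refine ⟨δ, eq_singleton_iff_unique_mem.mpr ⟨by simpa using ⟨C.mem_rel μ δ, C.mem_rel δ l⟩, ?_⟩⟩
  intro γ hγ
  obtain ⟨hμγ, hγl⟩ := (mem_filter.mp hγ).2
  by_contra hγδ
  refine hl (mem_biUnion.mpr ⟨γ, mem_erase.mpr ⟨hγδ, by simpa [nbhd] using hμγ⟩, ?_⟩)
  exact Set.mem_toFinset.mpr (C.mem_indisSet_of_mem (C.rel_mem δ l) hγl (C.mem_rel δ l))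

end CoherentConfiguration

open CoherentConfiguration

lemma six_mul_sub_one_mul_le (k c : ℕ) : 6 * ((k - 1) * c) ≤ 3 * c * k * (k - 1) := by
  rcases Nat.lt_or_ge k 2 with hk | hk
  · interval_cases k <;> simp
  · calc 6 * ((k - 1) * c) ≤ 3 * k * ((k - 1) * c) := Nat.mul_le_mul_right _ (by omega)
      _ = 3 * c * k * (k - 1) := by ring

theorem exists_good_point {Ω : Type*} [Fintype Ω] [DecidableEq Ω]
    (C : CoherentConfiguration Ω)
    (h : Fintype.card Ω > 3 * C.indisNum * C.maxValency * (C.maxValency - 1))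
    (μ : Ω) (Δ : Finset Ω) (hΔ : Δ.card ≤ 6) :
    ∃ l : Ω, ∀ δ ∈ Δ, interNum (C.rel μ δ) (C.rel δ l) (C.rel μ l) = 1 := by
  have hbad : #(Δ.biUnion (C.badSet μ)) < #(univ : Finset Ω) :=
    calc #(Δ.biUnion (C.badSet μ))
        ≤ #Δ * ((C.maxValency - 1) * C.indisNum) :=
          card_biUnion_le_card_mul _ _ _ fun δ _ => C.card_badSet_le μ δ
      _ ≤ 6 * ((C.maxValency - 1) * C.indisNum) := Nat.mul_le_mul_right _ hΔ
      _ ≤ 3 * C.indisNum * C.maxValency * (C.maxValency - 1) := six_mul_sub_one_mul_le _ _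
      _ < #(univ : Finset Ω) := card_univ (α := Ω) ▸ h
  obtain ⟨l, -, hl⟩ := exists_mem_notMem_of_card_lt_card hbad
  exact ⟨l, fun δ hδ =>
    C.interNum_eq_one_of_notMem_badSet fun hlδ => hl (mem_biUnion.mpr ⟨δ, hδ, hlδ⟩)⟩
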